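/- Let n, k, ℓ, t be positive integers with k ≥ t+1, ℓ ≥ t+2 and n ≥ (t+1)²(k+ℓ)²(k−t+1)(ℓ−t+1)+k+ℓ−t. Then: (i) if k ≥ t+2 and ℓ ≥ 4t−1, then (ℓ+1)·C(n−t−1, k−t−1)·h(ℓ, t+1, t) < h(k,ℓ,t)·h(ℓ,k,t); (ii) if t ≥ 2 and ℓ ≤ 4t−2, then (ℓ+1)·C(n−t−1, k−t−1)·h(ℓ, t+1, t) < a(k,t)·a(ℓ,t). -/
import Mathlib


/-- The interval `[a,b] = {a, a+1, …, b}` as a finset of naturals. -/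
def Iv (a b : ℕ) : Finset ℕ := Finset.Icc a b

/-- `ksubsets S k` is the family of all `k`-element subsets of `S`. -/
def ksubsets (S : Finset ℕ) (k : ℕ) : Finset (Finset ℕ) :=
  S.powerset.filter (fun F => F.card = k)

/-- Families `F` and `G` are cross `t`-intersecting. -/
def crossInt (t : ℕ) (F G : Finset (Finset ℕ)) : Prop :=
  ∀ A ∈ F, ∀ B ∈ G, t ≤ (A ∩ B).card

/-- The `t`-covering number of a family of subsets of `[n]`. -/
noncomputable def tau (n t : ℕ) (F : Finset (Finset ℕ)) : ℕ :=
  sInf {c : ℕ | ∃ T : Finset ℕ, T ⊆ Finset.Icc 1 n ∧ T.card = c ∧ ∀ A ∈ F, t ≤ (T ∩ A).card}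

/-- The collection of all `t`-covers of `F` of size `t+1`. -/
def covers (n t : ℕ) (F : Finset (Finset ℕ)) : Finset (Finset ℕ) :=
  (Finset.Icc 1 n).powerset.filter (fun T => T.card = t + 1 ∧ ∀ A ∈ F, t ≤ (T ∩ A).card)

/-- `F ⊆ ksubsets S k` and `G ⊆ ksubsets S l` form a maximal cross `t`-intersecting pair. -/
def maximalCrossIn (S : Finset ℕ) (k l t : ℕ) (F G : Finset (Finset ℕ)) : Prop :=
  F ⊆ ksubsets S k ∧ G ⊆ ksubsets S l ∧ crossInt t F G ∧
  ∀ F' G' : Finset (Finset ℕ), F' ⊆ ksubsets S k → G' ⊆ ksubsets S l →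
    crossInt t F' G' → F ⊆ F' → G ⊆ G' → F = F' ∧ G = G'

/-- Elementwise image of a family under a permutation. -/
def mapFam (σ : Equiv.Perm ℕ) (F : Finset (Finset ℕ)) : Finset (Finset ℕ) :=
  F.image (fun A => A.image σ)

/-- `σ` is a permutation of `[n]` (maps `[n]` into, hence onto, itself). -/
def permOn (n : ℕ) (σ : Equiv.Perm ℕ) : Prop := ∀ x ∈ Finset.Icc 1 n, σ x ∈ Finset.Icc 1 n

/-- The pairs `(F, G)` and `(F', G')` are isomorphic via a permutation of `[n]`. -/
def isoPair (n : ℕ) (F G F' G' : Finset (Finset ℕ)) : Prop :=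
  ∃ σ : Equiv.Perm ℕ, permOn n σ ∧ mapFam σ F = F' ∧ mapFam σ G = G'

/-- `F` and `F'` are isomorphic via a permutation of `[n]`. -/
def isoFam (n : ℕ) (F F' : Finset (Finset ℕ)) : Prop :=
  ∃ σ : Equiv.Perm ℕ, permOn n σ ∧ mapFam σ F = F'

/-- Construction `𝒜(k,t) = {F ∈ C([n],k) : |F ∩ [t+2]| ≥ t+1}`. -/
def famA (n k t : ℕ) : Finset (Finset ℕ) :=
  (ksubsets (Iv 1 n) k).filter (fun F => t + 1 ≤ (F ∩ Iv 1 (t+2)).card)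

/-- Construction `𝒞₁(ℓ,t) = {[ℓ+1]\{i} : i ∈ [t+1]} ∪ {G ∈ C([n],ℓ) : [t+1] ⊆ G}`. -/
def famC1 (n l t : ℕ) : Finset (Finset ℕ) :=
  (Iv 1 (t+1)).image (fun i => (Iv 1 (l+1)).erase i) ∪
  (ksubsets (Iv 1 n) l).filter (fun G => Iv 1 (t+1) ⊆ G)

/-- Construction `𝒞₂(k,t;ℓ)`. -/
def famC2 (n k t l : ℕ) : Finset (Finset ℕ) :=
  (ksubsets (Iv 1 n) k).filter
    (fun F => (F ∩ Iv 1 (t+1)).card = t ∧ 1 ≤ (F ∩ Iv (t+2) (l+1)).card) ∪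
  (ksubsets (Iv 1 n) k).filter (fun F => Iv 1 (t+1) ⊆ F)

/-- Construction `ℋ(k,t;X,Y) = {F ∈ C([n],k) : [t] ⊆ F, |F∩Y| ≥ 1} ∪ {(X∪[t])\{i} : i ∈ [t]}`. -/
def famH (n k t : ℕ) (X Y : Finset ℕ) : Finset (Finset ℕ) :=
  (ksubsets (Iv 1 n) k).filter (fun F => Iv 1 t ⊆ F ∧ 1 ≤ (F ∩ Y).card) ∪
  (Iv 1 t).image (fun i => (X ∪ Iv 1 t).erase i)

/-- Construction `ℬ(k;(a₁,a₂,a₃,a₄))`. -/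
def famB (n k a1 a2 a3 a4 : ℕ) : Finset (Finset ℕ) :=
  (ksubsets (Iv 1 n) k).filter
    (fun F => ({a1, a2} : Finset ℕ) ⊆ F ∨ ({a2, a3} : Finset ℕ) ⊆ F ∨ ({a3, a4} : Finset ℕ) ⊆ F)

/-- Binomial coefficient `C(a,b)` for integers, `0` if `b < 0` or `b > a`. -/
def ch (a b : ℤ) : ℤ := if 0 ≤ b ∧ b ≤ a then (Nat.choose a.toNat b.toNat : ℤ) else 0

/-- `g(m,x,y,t) = m·C(n−t−1,x−t−1) + y(t+1)(y−t+1)·C(n−t−2,x−t−2)`. -/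
def gfun (n m x y t : ℤ) : ℤ :=
  m * ch (n - t - 1) (x - t - 1) + y * (t + 1) * (y - t + 1) * ch (n - t - 2) (x - t - 2)

/-- `a(x,t) = (t+2)·C(n−t−2,x−t−1) + C(n−t−2,x−t−2)`. -/
def afun (n x t : ℤ) : ℤ := (t + 2) * ch (n - t - 2) (x - t - 1) + ch (n - t - 2) (x - t - 2)

/-- `c₁(y,t) = C(n−t−1,y−t−1) + t + 1`. -/
def c1fun (n y t : ℤ) : ℤ := ch (n - t - 1) (y - t - 1) + t + 1

/-- `c₂(x,y,t) = (t+1)(C(n−t−1,x−t) − C(n−y−1,x−t)) + C(n−t−1,x−t−1)`. -/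
def c2fun (n x y t : ℤ) : ℤ :=
  (t + 1) * (ch (n - t - 1) (x - t) - ch (n - y - 1) (x - t)) + ch (n - t - 1) (x - t - 1)

/-- `h(x,y,t) = C(n−t,x−t) − C(n−y−1,x−t) + t`. -/
def hfun (n x y t : ℤ) : ℤ := ch (n - t) (x - t) - ch (n - y - 1) (x - t) + t
namespace LhAux

lemma ch_nonneg (x y : ℤ) : 0 ≤ ch x y := by
  unfold ch; split
  · positivity
  · exact le_refl 0

lemma ch_eq (x y : ℤ) (X Y : ℕ) (hX : x = (X:ℤ)) (hY : y = (Y:ℤ)) (hXY : Y ≤ X) :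
    ch x y = (X.choose Y : ℤ) := by
  subst hX hY
  unfold ch
  rw [if_pos ⟨Int.natCast_nonneg _, by exact_mod_cast hXY⟩, Int.toNat_natCast, Int.toNat_natCast]

lemma bern (e s : ℕ) : ∀ d : ℕ, 2*d*e ≤ s → s*(s+e)^d ≤ s^(d+1) + 2*d*e*s^d := by
  intro d
  induction d with
  | zero => intro _; simp
  | succ d ih =>
    intro h
    have h' : 2*d*e ≤ s := le_trans (by nlinarith) h
    have ihh := ih h'
    have step1 : s*(s+e)^(d+1) = (s*(s+e)^d)*(s+e) := by ring
    have step2 : (s*(s+e)^d)*(s+e) ≤ (s^(d+1) + 2*d*e*s^d)*(s+e) :=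
      Nat.mul_le_mul_right _ ihh
    have step3 : (s^(d+1) + 2*d*e*s^d)*(s+e)
        = s^(d+2) + e*s^(d+1) + 2*d*e*s^(d+1) + (2*d*e)*(e*s^d) := by ring
    have step4 : (2*d*e)*(e*s^d) ≤ s*(e*s^d) := Nat.mul_le_mul_right _ h'
    have step5 : s*(e*s^d) = e*s^(d+1) := by ring
    calc s*(s+e)^(d+1) = (s*(s+e)^d)*(s+e) := step1
      _ ≤ (s^(d+1) + 2*d*e*s^d)*(s+e) := step2
      _ = s^(d+2) + e*s^(d+1) + 2*d*e*s^(d+1) + (2*d*e)*(e*s^d) := step3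
      _ ≤ s^(d+2) + e*s^(d+1) + 2*d*e*s^(d+1) + e*s^(d+1) := by
          have := step4; rw [step5] at this; omega
      _ = s^(d+1+1) + 2*(d+1)*e*s^(d+1) := by ring

lemma key (m r : ℕ) : ∀ d, (m+d).choose r * (m+1-r)^d ≤ m.choose r * (m+d)^d := by
  intro d
  induction d with
  | zero => simp
  | succ d ih =>
    have id1 : (m+d).choose r * (m+d+1) = (m+d+1).choose r * (m+d+1-r) :=
      Nat.choose_mul_succ_eq (m+d) r
    have h1 : (m+(d+1)).choose r * (m+1-r) ≤ (m+d+1).choose r * (m+d+1-r) := by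
      have : m+(d+1) = m+d+1 := by ring
      rw [this]
      exact Nat.mul_le_mul_left _ (by omega)
    calc (m+(d+1)).choose r * (m+1-r)^(d+1)
        = ((m+(d+1)).choose r * (m+1-r)) * (m+1-r)^d := by ring
      _ ≤ ((m+d+1).choose r * (m+d+1-r)) * (m+1-r)^d := Nat.mul_le_mul_right _ h1
      _ = ((m+d).choose r * (m+1-r)^d) * (m+d+1) := by rw [← id1]; ring
      _ ≤ (m.choose r * (m+d)^d) * (m+d+1) := Nat.mul_le_mul_right _ ih
      _ ≤ (m.choose r * (m+d+1)^d) * (m+d+1) := by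
          exact Nat.mul_le_mul_right _ (Nat.mul_le_mul_left _ (Nat.pow_le_pow_left (by omega) d))
      _ = m.choose r * (m+(d+1))^(d+1) := by ring_nf

lemma ratio (M m r d : ℕ) (hM : 1 ≤ M) (h : 2*M*d*(r+d) + r ≤ m + 1) :
    M * (m+d).choose r ≤ (M+1) * m.choose r := by
  rcases Nat.eq_zero_or_pos d with hd | hd
  · subst hd; simp; exact Nat.mul_le_mul_right _ (by omega)
  · have hde : 2*M*d*(r+d) ≤ m+1-r := by omega
    have hmul : 0 < 2*M*d := Nat.mul_pos (Nat.mul_pos (by omega) hM) hd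
    have h2 : 1*(r+d) ≤ (2*M*d)*(r+d) := Nat.mul_le_mul_right _ hmul
    have hrm : r ≤ m := by linarith
    set s := m+1-r with hs
    have hs1 : 1 ≤ s := by omega
    have hmd : m + d ≤ s + (r+d) := by omega
    have k1 := key m r d
    have k2 : (m+d)^d ≤ (s+(r+d))^d := Nat.pow_le_pow_left hmd d
    have hde2 : 2*d*(r+d) ≤ s := by nlinarith
    have b1 := bern (r+d) s d hde2
    have main : (M * ((m+d).choose r)) * s^(d+1) ≤ ((M+1) * (m.choose r)) * s^(d+1) := by
      calc (M * ((m+d).choose r)) * s^(d+1) = (M * s) * ((m+d).choose r * s^d) := by ring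
        _ ≤ (M * s) * (m.choose r * (m+d)^d) := Nat.mul_le_mul_left _ k1
        _ ≤ (M * s) * (m.choose r * (s+(r+d))^d) :=
            Nat.mul_le_mul_left _ (Nat.mul_le_mul_left _ k2)
        _ = (M * (m.choose r)) * (s*(s+(r+d))^d) := by ring
        _ ≤ (M * (m.choose r)) * (s^(d+1) + 2*d*(r+d)*s^d) := Nat.mul_le_mul_left _ b1
        _ = (M * (m.choose r)) * s^(d+1) + (m.choose r) * ((2*M*d*(r+d)) * s^d) := by ring
        _ ≤ (M * (m.choose r)) * s^(d+1) + (m.choose r) * (s * s^d) :=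
            Nat.add_le_add_left (Nat.mul_le_mul_left _ (Nat.mul_le_mul_right _ hde)) _
        _ = ((M+1) * (m.choose r)) * s^(d+1) := by ring
    exact Nat.le_of_mul_le_mul_right main (by positivity)

lemma tele (m r : ℕ) : ∀ d, m.choose (r+1) + d * m.choose r ≤ (m+d).choose (r+1) := by
  intro d
  induction d with
  | zero => simp
  | succ d ih =>
    have e1 : (m+(d+1)).choose (r+1) = (m+d).choose r + (m+d).choose (r+1) := by
      have : m+(d+1) = (m+d)+1 := by ring
      rw [this, Nat.choose_succ_succ]
    have mono : m.choose r ≤ (m+d).choose r := Nat.choose_mono r (by omega)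
    calc m.choose (r+1) + (d+1) * m.choose r
        = (m.choose (r+1) + d * m.choose r) + m.choose r := by ring
      _ ≤ (m+d).choose (r+1) + (m+d).choose r := Nat.add_le_add ih mono
      _ = (m+(d+1)).choose (r+1) := by rw [e1]; omega

lemma choose_ge (m r : ℕ) (h1 : 1 ≤ r) (h2 : r ≤ m) : m + 1 - r ≤ m.choose r := by
  obtain ⟨r', rfl⟩ : ∃ r', r = r'+1 := ⟨r-1, by omega⟩
  have h := tele r' r' (m - r')
  rw [show r' + (m - r') = m from by omega] at h
  simp [Nat.choose_self, Nat.choose_succ_self_right] at h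
  have : (r'+1).choose (r'+1) = 1 := Nat.choose_self _
  have h0 : Nat.choose r' (r'+1) = 0 := Nat.choose_eq_zero_of_lt (by omega)
  have hcs : Nat.choose r' r' = 1 := Nat.choose_self _
  have h' := tele r' r' (m - r')
  rw [show r' + (m - r') = m from by omega, h0, hcs] at h'
  omega

lemma core (l t P Q1 Q2 P' Q' X R : ℤ)
    (hl : 0 ≤ l) (ht : 1 ≤ t) (hP : 0 ≤ P) (hQ1 : 0 ≤ Q1) (hQ2 : 0 ≤ Q2)
    (hP' : 0 ≤ P') (hQ' : 0 ≤ Q')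
    (r1 : 32*P ≤ 33*P') (r2 : 32*Q1 ≤ 33*Q') (r3 : Q2 ≤ Q1) (r4 : 9*t ≤ Q')
    (r5 : 9*(l+1) ≤ 4*X) (r6 : X*P'*Q' + 1 ≤ R) :
    (l+1)*P*(Q1+Q2+t) < R := by
  have h0 : (0:ℤ) ≤ l+1 := by linarith
  have hlp : (0:ℤ) ≤ (l+1)*P := by positivity
  have s1' : (l+1)*P*(Q1+Q2+t) ≤ (l+1)*(P*(2*Q1+t)) := by
    have := mul_le_mul_of_nonneg_left (show Q1+Q2+t ≤ 2*Q1+t by linarith) hlp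
    linarith [this]
  have c1 : (32*P)*(64*Q1+32*t) ≤ (33*P')*(66*Q'+32*t) :=
    mul_le_mul r1 (by linarith) (by linarith) (by linarith)
  have c2 : (33*P')*(33*(66*Q'+32*t)) ≤ (33*P')*(2304*Q') :=
    mul_le_mul_of_nonneg_left (by linarith) (by linarith)
  have c3 : 9*(l+1)*(P'*Q') ≤ 4*X*(P'*Q') :=
    mul_le_mul_of_nonneg_right r5 (mul_nonneg hP' hQ')
  have step : 33792*((l+1)*P*(Q1+Q2+t)) ≤ 33792*(X*P'*Q') := by
    calc 33792*((l+1)*P*(Q1+Q2+t)) ≤ 33792*((l+1)*(P*(2*Q1+t))) := by linarith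
      _ = 33*((l+1)*((32*P)*(64*Q1+32*t))) := by ring
      _ ≤ 33*((l+1)*((33*P')*(66*Q'+32*t))) := by
          have := mul_le_mul_of_nonneg_left c1 h0
          linarith
      _ = (l+1)*((33*P')*(33*(66*Q'+32*t))) := by ring
      _ ≤ (l+1)*((33*P')*(2304*Q')) := mul_le_mul_of_nonneg_left c2 h0
      _ = 8448*(9*(l+1)*(P'*Q')) := by ring
      _ ≤ 8448*(4*X*(P'*Q')) := by linarith
      _ = 33792*(X*P'*Q') := by ring
  have final : (l+1)*P*(Q1+Q2+t) ≤ X*P'*Q' := le_of_mul_le_mul_left step (by norm_num)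
  linarith



lemma pasc (m r : ℕ) : (m+1+1).choose (r+1) = (m+1).choose r + (m.choose r + m.choose (r+1)) := by
  rw [Nat.choose_succ_succ (m+1) r, Nat.choose_succ_succ m r]

lemma r5i (a b t L : ℤ) (ha : 1 ≤ a) (hb : 0 ≤ b) (h3 : 3*t ≤ b+2) (hL : L = t+1+b) :
    9*(L+1) ≤ 4*((a+2)*(b+2)) := by
  nlinarith [mul_nonneg (sub_nonneg.mpr ha) (by linarith : (0:ℤ) ≤ b+2)]

lemma r5ii (b t L : ℤ) (ht : 2 ≤ t) (hbu : b ≤ 3*t - 3) (hL : L = t+1+b) :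
    9*(L+1) ≤ 4*((t+2)^2) := by
  nlinarith [sq_nonneg (2*t-5)]

lemma r6i (a b t P' Q' A A' B B' : ℤ) (ht : 1 ≤ t) (ha : 0 ≤ a) (hb : 0 ≤ b)
    (hP' : 0 ≤ P') (hQ' : 0 ≤ Q') (hT1 : A' + (b+2)*P' ≤ A) (hT2 : B' + (a+2)*Q' ≤ B) :
    ((a+2)*(b+2))*P'*Q' + 1 ≤ (A - A' + t)*(B - B' + t) := by
  have hu : (b+2)*P' + t ≤ A - A' + t := by linarith
  have hv : (a+2)*Q' + t ≤ B - B' + t := by linarith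
  have hv0 : (0:ℤ) ≤ (a+2)*Q' + t := by positivity
  have hu0 : (0:ℤ) ≤ (b+2)*P' + t := by positivity
  have hm : ((b+2)*P' + t) * ((a+2)*Q' + t) ≤ (A - A' + t) * (B - B' + t) :=
    mul_le_mul hu hv hv0 (by linarith)
  nlinarith [hm, mul_nonneg (mul_nonneg (show (0:ℤ) ≤ t by linarith) (show (0:ℤ) ≤ b+2 by linarith)) hP',
    mul_nonneg (mul_nonneg (show (0:ℤ) ≤ t by linarith) (show (0:ℤ) ≤ a+2 by linarith)) hQ',
    mul_le_mul ht ht (by norm_num) (by linarith)]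

lemma r6ii (t A1 B1 B2 c : ℤ) (ht : 1 ≤ t) (hA1 : 1 ≤ A1) (hB1 : 0 ≤ B1) (hB2 : 1 ≤ B2) (hc : 0 ≤ c) :
    ((t+2)^2)*A1*B1 + 1 ≤ ((t+2)*A1 + c)*((t+2)*B1 + B2) := by
  have h1 : (1:ℤ)*1 ≤ A1*B2 := mul_le_mul hA1 hB2 (by norm_num) (by linarith)
  have h2 : (0:ℤ) ≤ c*((t+2)*B1 + B2) := mul_nonneg hc (by positivity)
  nlinarith [mul_nonneg (mul_nonneg (by linarith : (0:ℤ) ≤ t+2) (by linarith : (0:ℤ) ≤ A1)) hB1]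


end LhAux

set_option maxHeartbeats 2000000 in
open LhAux in
/-- Lemma 4.5. -/
theorem lh_lt
    (n k l t : ℕ) (hn0 : 0 < n) (ht0 : 0 < t) (hk : t + 1 ≤ k) (hl : t + 2 ≤ l)
    (hn : (t+1)^2 * (k+l)^2 * (k - t + 1) * (l - t + 1) + k + l - t ≤ n) :
    (t + 2 ≤ k → 4 * t - 1 ≤ l →
      ((l : ℤ) + 1) * ch ((n : ℤ) - t - 1) ((k : ℤ) - t - 1) * hfun n l (t+1) t <
        hfun n k l t * hfun n l k t) ∧
    (2 ≤ t → l ≤ 4 * t - 2 →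
      ((l : ℤ) + 1) * ch ((n : ℤ) - t - 1) ((k : ℤ) - t - 1) * hfun n l (t+1) t <
        afun n k t * afun n l t) := by
  obtain ⟨a1, rfl⟩ : ∃ x, k = t+1+x := ⟨k-t-1, by omega⟩
  obtain ⟨b1, rfl⟩ : ∃ x, l = t+1+x := ⟨l-t-1, by omega⟩
  have hb1 : 1 ≤ b1 := by omega
  rw [show t+1+a1 - t = a1+1 from by omega, show t+1+b1 - t = b1+1 from by omega] at hn
  generalize hEg : (t+1)^2 * ((t+1+a1)+(t+1+b1))^2 * (a1+1+1) * (b1+1+1) = E at hn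
  have hnE : E + t + a1 + b1 + 2 ≤ n := by omega
  have hS5 : 5 ≤ 2*t+a1+b1+2 := by omega
  have h4' : 4 ≤ (t+1)^2 := by nlinarith
  have h6' : 6 ≤ (a1+2)*(b1+2) := by nlinarith
  have hE24 : 24*((2*t+a1+b1+2)^2) ≤ E := by
    calc 24*((2*t+a1+b1+2)^2) = (4*((2*t+a1+b1+2)^2))*6 := by ring
      _ ≤ ((t+1)^2*((2*t+a1+b1+2)^2))*((a1+2)*(b1+2)) :=
          Nat.mul_le_mul (Nat.mul_le_mul_right _ h4') h6'
      _ = E := by rw [← hEg]; ring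
  have hE120 : 120*(2*t+a1+b1+2) ≤ E := by
    calc 120*(2*t+a1+b1+2) = 24*(5*(2*t+a1+b1+2)) := by ring
      _ ≤ 24*((2*t+a1+b1+2)*(2*t+a1+b1+2)) :=
          Nat.mul_le_mul_left _ (Nat.mul_le_mul_right _ hS5)
      _ = 24*((2*t+a1+b1+2)^2) := by ring
      _ ≤ E := hE24
  have room : 2*t + a1 + b1 + 100 ≤ n := by omega

  -- common natural-number facts
  have pascN : (n-t).choose (b1+1) = (n-t-1).choose b1 + ((n-t-2).choose b1 + (n-t-2).choose (b1+1)) := by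
    have h := pasc (n-t-2) b1
    rw [show n-t-2+1+1 = n-t from by omega, show n-t-2+1 = n-t-1 from by omega] at h
    exact h
  have R3 : (n-t-2).choose b1 ≤ (n-t-1).choose b1 := Nat.choose_mono b1 (by omega)
  -- ch translations common to both parts (LHS)
  have E1 : ch ((n:ℤ) - (t:ℤ) - 1) (((t+1+a1 : ℕ) : ℤ) - (t:ℤ) - 1) = (((n-t-1).choose a1 : ℕ) : ℤ) :=
    ch_eq _ _ _ _ (by omega) (by omega) (by omega)
  have E2 : ch ((n:ℤ) - (t:ℤ)) (((t+1+b1 : ℕ) : ℤ) - (t:ℤ)) = (((n-t).choose (b1+1) : ℕ) : ℤ) :=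
    ch_eq _ _ _ _ (by omega) (by omega) (by omega)
  have E3 : ch ((n:ℤ) - ((t:ℤ) + 1) - 1) (((t+1+b1 : ℕ) : ℤ) - (t:ℤ)) = (((n-t-2).choose (b1+1) : ℕ) : ℤ) :=
    ch_eq _ _ _ _ (by omega) (by omega) (by omega)
  have hP2 : (((n-t).choose (b1+1) : ℕ) : ℤ) - (((n-t-2).choose (b1+1) : ℕ) : ℤ) + (t:ℤ)
      = (((n-t-1).choose b1 : ℕ) : ℤ) + (((n-t-2).choose b1 : ℕ) : ℤ) + (t:ℤ) := by
    omega
  have ht1 : (1:ℤ) ≤ (t:ℤ) := by exact_mod_cast ht0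
  have hl0 : (0:ℤ) ≤ ((t+1+b1 : ℕ) : ℤ) := by positivity
  constructor
  · -- part (i)
    intro hk2 hl4
    have ha1 : 1 ≤ a1 := by omega
    have hb3t : 3*t ≤ b1 + 2 := by omega
    have hS6 : 6 ≤ 2*t+a1+b1+2 := by omega
    -- ratio conditions
    have hD1E : 64*((b1+1)*(a1+b1+1)) ≤ E := by
      have c : 64 ≤ (t+1)^2*(2*t+a1+b1+2)*(a1+2) := by
        calc (64:ℕ) ≤ (4*6)*3 := by norm_num
          _ ≤ ((t+1)^2*(2*t+a1+b1+2))*(a1+2) :=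
              Nat.mul_le_mul (Nat.mul_le_mul h4' hS6) (by omega)
      have cc : (b1+1)*(a1+b1+1) ≤ (b1+2)*(2*t+a1+b1+2) := Nat.mul_le_mul (by omega) (by omega)
      calc 64*((b1+1)*(a1+b1+1)) ≤ ((t+1)^2*(2*t+a1+b1+2)*(a1+2))*((b1+2)*(2*t+a1+b1+2)) :=
            Nat.mul_le_mul c cc
        _ = E := by rw [← hEg]; ring
    have hD2E : 64*((a1+1)*(a1+b1+1)) ≤ E := by
      have c : 64 ≤ (t+1)^2*(2*t+a1+b1+2)*(b1+2) := by
        calc (64:ℕ) ≤ (4*6)*3 := by norm_num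
          _ ≤ ((t+1)^2*(2*t+a1+b1+2))*(b1+2) :=
              Nat.mul_le_mul (Nat.mul_le_mul h4' hS6) (by omega)
      have cc : (a1+1)*(a1+b1+1) ≤ (a1+2)*(2*t+a1+b1+2) := Nat.mul_le_mul (by omega) (by omega)
      calc 64*((a1+1)*(a1+b1+1)) ≤ ((t+1)^2*(2*t+a1+b1+2)*(b1+2))*((a1+2)*(2*t+a1+b1+2)) :=
            Nat.mul_le_mul c cc
        _ = E := by rw [← hEg]; ring
    have R1 : 32 * ((n-t-1).choose a1) ≤ 33 * ((n-t-b1-2).choose a1) := by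
      have cond : 2*32*(b1+1)*(a1+(b1+1)) + a1 ≤ (n-t-b1-2) + 1 := by
        have heq : 2*32*(b1+1)*(a1+(b1+1)) = 64*((b1+1)*(a1+b1+1)) := by ring
        omega
      have h := ratio 32 (n-t-b1-2) a1 (b1+1) (by norm_num) cond
      rw [show n-t-b1-2+(b1+1) = n-t-1 from by omega] at h
      exact h
    have R2 : 32 * ((n-t-1).choose b1) ≤ 33 * ((n-t-a1-2).choose b1) := by
      have cond : 2*32*(a1+1)*(b1+(a1+1)) + b1 ≤ (n-t-a1-2) + 1 := by
        have heq : 2*32*(a1+1)*(b1+(a1+1)) = 64*((a1+1)*(a1+b1+1)) := by ring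
        omega
      have h := ratio 32 (n-t-a1-2) b1 (a1+1) (by norm_num) cond
      rw [show n-t-a1-2+(a1+1) = n-t-1 from by omega] at h
      exact h
    have R4 : 9*t ≤ (n-t-a1-2).choose b1 := by
      have hcg := choose_ge (n-t-a1-2) b1 hb1 (by omega)
      omega
    have T1 : (n-t-b1-2).choose (a1+1) + (b1+2) * ((n-t-b1-2).choose a1) ≤ (n-t).choose (a1+1) := by
      have h := tele (n-t-b1-2) a1 (b1+2)
      rw [show n-t-b1-2+(b1+2) = n-t from by omega] at h
      exact h
    have T2 : (n-t-a1-2).choose (b1+1) + (a1+2) * ((n-t-a1-2).choose b1) ≤ (n-t).choose (b1+1) := by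
      have h := tele (n-t-a1-2) b1 (a1+2)
      rw [show n-t-a1-2+(a1+2) = n-t from by omega] at h
      exact h
    -- remaining ch translations
    have E4 : ch ((n:ℤ) - (t:ℤ)) (((t+1+a1 : ℕ) : ℤ) - (t:ℤ)) = (((n-t).choose (a1+1) : ℕ) : ℤ) :=
      ch_eq _ _ _ _ (by omega) (by omega) (by omega)
    have E5 : ch ((n:ℤ) - ((t+1+b1 : ℕ) : ℤ) - 1) (((t+1+a1 : ℕ) : ℤ) - (t:ℤ)) = (((n-t-b1-2).choose (a1+1) : ℕ) : ℤ) :=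
      ch_eq _ _ _ _ (by omega) (by omega) (by omega)
    have E6 : ch ((n:ℤ) - ((t+1+a1 : ℕ) : ℤ) - 1) (((t+1+b1 : ℕ) : ℤ) - (t:ℤ)) = (((n-t-a1-2).choose (b1+1) : ℕ) : ℤ) :=
      ch_eq _ _ _ _ (by omega) (by omega) (by omega)
    simp only [hfun]
    rw [E1, E2, E3, E4, E5, E6, hP2]
    -- set up integer quantities
    have r1 : (32:ℤ) * (((n-t-1).choose a1 : ℕ) : ℤ) ≤ 33 * (((n-t-b1-2).choose a1 : ℕ) : ℤ) := by
      exact_mod_cast R1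
    have r2 : (32:ℤ) * (((n-t-1).choose b1 : ℕ) : ℤ) ≤ 33 * (((n-t-a1-2).choose b1 : ℕ) : ℤ) := by
      exact_mod_cast R2
    have r3 : (((n-t-2).choose b1 : ℕ) : ℤ) ≤ (((n-t-1).choose b1 : ℕ) : ℤ) := by exact_mod_cast R3
    have r4 : 9*(t:ℤ) ≤ (((n-t-a1-2).choose b1 : ℕ) : ℤ) := by exact_mod_cast R4
    have ha1c : (1:ℤ) ≤ (a1:ℤ) := by exact_mod_cast ha1
    have hb3tc : 3*(t:ℤ) ≤ (b1:ℤ) + 2 := by exact_mod_cast hb3t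
    have hb1c : (0:ℤ) ≤ (b1:ℤ) := by positivity
    have r5 : 9*(((t+1+b1 : ℕ) : ℤ)+1) ≤ 4*(((a1:ℤ)+2)*((b1:ℤ)+2)) :=
      r5i _ _ _ _ ha1c hb1c hb3tc (by push_cast; ring)
    have hT1 : (((n-t-b1-2).choose (a1+1) : ℕ) : ℤ) + ((b1:ℤ)+2) * (((n-t-b1-2).choose a1 : ℕ) : ℤ)
        ≤ (((n-t).choose (a1+1) : ℕ) : ℤ) := by exact_mod_cast T1
    have hT2 : (((n-t-a1-2).choose (b1+1) : ℕ) : ℤ) + ((a1:ℤ)+2) * (((n-t-a1-2).choose b1 : ℕ) : ℤ)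
        ≤ (((n-t).choose (b1+1) : ℕ) : ℤ) := by exact_mod_cast T2
    have hP'0 : (0:ℤ) ≤ (((n-t-b1-2).choose a1 : ℕ) : ℤ) := by positivity
    have hQ'0 : (0:ℤ) ≤ (((n-t-a1-2).choose b1 : ℕ) : ℤ) := by positivity
    have r6 : (((a1:ℤ)+2)*((b1:ℤ)+2)) * (((n-t-b1-2).choose a1 : ℕ) : ℤ) * (((n-t-a1-2).choose b1 : ℕ) : ℤ) + 1
        ≤ ((((n-t).choose (a1+1) : ℕ) : ℤ) - (((n-t-b1-2).choose (a1+1) : ℕ) : ℤ) + (t:ℤ))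
          * ((((n-t).choose (b1+1) : ℕ) : ℤ) - (((n-t-a1-2).choose (b1+1) : ℕ) : ℤ) + (t:ℤ)) :=
      r6i _ _ _ _ _ _ _ _ _ ht1 (by positivity) hb1c hP'0 hQ'0 hT1 hT2
    exact core _ _ _ _ _ _ _ _ _ hl0 ht1 (by positivity) (by positivity) (by positivity)
      hP'0 hQ'0 r1 r2 r3 r4 r5 r6
  · -- part (ii)
    intro ht2 hl42
    have hb1u : b1 ≤ 3*t - 3 := by omega
    have R1' : 32 * ((n-t-1).choose a1) ≤ 33 * ((n-t-2).choose a1) := by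
      have cond : 2*32*1*(a1+1) + a1 ≤ (n-t-2) + 1 := by omega
      have h := ratio 32 (n-t-2) a1 1 (by norm_num) cond
      rw [show n-t-2+1 = n-t-1 from by omega] at h
      exact h
    have R2' : 32 * ((n-t-1).choose b1) ≤ 33 * ((n-t-2).choose b1) := by
      have cond : 2*32*1*(b1+1) + b1 ≤ (n-t-2) + 1 := by omega
      have h := ratio 32 (n-t-2) b1 1 (by norm_num) cond
      rw [show n-t-2+1 = n-t-1 from by omega] at h
      exact h
    have R4' : 9*t ≤ (n-t-2).choose b1 := by
      have hcg := choose_ge (n-t-2) b1 hb1 (by omega)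
      omega
    have hA1 : 1 ≤ (n-t-2).choose a1 := Nat.choose_pos (by omega)
    have hB2 : 1 ≤ (n-t-2).choose (b1-1) := Nat.choose_pos (by omega)
    have E7 : ch ((n:ℤ) - (t:ℤ) - 2) (((t+1+a1 : ℕ) : ℤ) - (t:ℤ) - 1) = (((n-t-2).choose a1 : ℕ) : ℤ) :=
      ch_eq _ _ _ _ (by omega) (by omega) (by omega)
    have E8 : ch ((n:ℤ) - (t:ℤ) - 2) (((t+1+b1 : ℕ) : ℤ) - (t:ℤ) - 1) = (((n-t-2).choose b1 : ℕ) : ℤ) :=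
      ch_eq _ _ _ _ (by omega) (by omega) (by omega)
    have E9 : ch ((n:ℤ) - (t:ℤ) - 2) (((t+1+b1 : ℕ) : ℤ) - (t:ℤ) - 2) = (((n-t-2).choose (b1-1) : ℕ) : ℤ) :=
      ch_eq _ _ _ _ (by omega) (by omega) (by omega)
    simp only [hfun, afun]
    rw [E1, E2, E3, E7, E8, E9, hP2]
    have r1 : (32:ℤ) * (((n-t-1).choose a1 : ℕ) : ℤ) ≤ 33 * (((n-t-2).choose a1 : ℕ) : ℤ) := by
      exact_mod_cast R1'
    have r2 : (32:ℤ) * (((n-t-1).choose b1 : ℕ) : ℤ) ≤ 33 * (((n-t-2).choose b1 : ℕ) : ℤ) := by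
      exact_mod_cast R2'
    have r3 : (((n-t-2).choose b1 : ℕ) : ℤ) ≤ (((n-t-1).choose b1 : ℕ) : ℤ) := by exact_mod_cast R3
    have r4 : 9*(t:ℤ) ≤ (((n-t-2).choose b1 : ℕ) : ℤ) := by exact_mod_cast R4'
    have hb1uc : (b1:ℤ) ≤ 3*(t:ℤ) - 3 := by omega
    have ht2c : (2:ℤ) ≤ (t:ℤ) := by exact_mod_cast ht2
    have r5 : 9*(((t+1+b1 : ℕ) : ℤ)+1) ≤ 4*(((t:ℤ)+2)^2) :=
      r5ii _ _ _ ht2c hb1uc (by push_cast; ring)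
    have hA1c : (1:ℤ) ≤ (((n-t-2).choose a1 : ℕ) : ℤ) := by exact_mod_cast hA1
    have hB2c : (1:ℤ) ≤ (((n-t-2).choose (b1-1) : ℕ) : ℤ) := by exact_mod_cast hB2
    have hB1c : (0:ℤ) ≤ (((n-t-2).choose b1 : ℕ) : ℤ) := by positivity
    have hcA2 : (0:ℤ) ≤ ch ((n:ℤ) - (t:ℤ) - 2) (((t+1+a1 : ℕ) : ℤ) - (t:ℤ) - 2) := ch_nonneg _ _
    have r6 : (((t:ℤ)+2)^2) * (((n-t-2).choose a1 : ℕ) : ℤ) * (((n-t-2).choose b1 : ℕ) : ℤ) + 1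
        ≤ (((t:ℤ)+2) * (((n-t-2).choose a1 : ℕ) : ℤ) + ch ((n:ℤ) - (t:ℤ) - 2) (((t+1+a1 : ℕ) : ℤ) - (t:ℤ) - 2))
          * (((t:ℤ)+2) * (((n-t-2).choose b1 : ℕ) : ℤ) + (((n-t-2).choose (b1-1) : ℕ) : ℤ)) :=
      r6ii _ _ _ _ _ ht1 hA1c hB1c hB2c hcA2
    exact core _ _ _ _ _ _ _ _ _ hl0 ht1 (by positivity) (by positivity) (by positivity)
      (by positivity) hB1c r1 r2 r3 r4 r5 r6
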